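/- arXiv:1012.5843 — 2 statements merged into one kernel-verified Lean document; each statement's English description precedes it below -/
import Mathlib

section
/- The subvariety X8 of singular matrices is a smooth global complete intersection of codimension 2 in X, cut out by the two equations q1(p(A)) = 0 and q2(p(A)) = 0, where p(A) is the common zero of the linear entries of A. -/
/-!
STATEMENT 7.  X8 is a smooth global complete intersection of codimension 2 in X.

We identify the parameter space of matrices A = (z1, q1; z2, q2) with k^18 = Fin 18 → k:
* coordinates 0–2: coefficients of the linear form z1 = A0·x0 + A1·x1 + A2·x2,
* coordinates 3–5: coefficients of the linear form z2,
* coordinates 6–11: coefficients of the quadratic form q1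
  (monomials x0², x0x1, x0x2, x1², x1x2, x2²),
* coordinates 12–17: coefficients of the quadratic form q2.

X ⊂ k^18 is the open subset where z1, z2 are linearly independent and det A ≠ 0.
The common zero p(A) of z1, z2 is the cross product of the coefficient vectors, and
X8 is cut out in X by the two global equations F1(A) = q1(p(A)) = 0 and
F2(A) = q2(p(A)) = 0, which are polynomials in the 18 coordinates.  Smoothness of
codimension 2 means that at every point of X8 the gradients of F1 and F2 are linearly
independent.
-/

open MvPolynomial

variable (k : Type*) [Field k] [IsAlgClosed k] [CharZero k]

/-- First coordinate of p(A) = z1 × z2 as a polynomial in the 18 matrix coordinates. -/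
noncomputable def P0 : MvPolynomial (Fin 18) k := X 1 * X 5 - X 2 * X 4
/-- Second coordinate of p(A). -/
noncomputable def P1 : MvPolynomial (Fin 18) k := X 2 * X 3 - X 0 * X 5
/-- Third coordinate of p(A). -/
noncomputable def P2 : MvPolynomial (Fin 18) k := X 0 * X 4 - X 1 * X 3

/-- The first global equation of X8 in X:  F1(A) = q1(p(A)). -/
noncomputable def F1 : MvPolynomial (Fin 18) k :=
  X 6 * (P0 k) ^ 2 + X 7 * (P0 k * P1 k) + X 8 * (P0 k * P2 k)
    + X 9 * (P1 k) ^ 2 + X 10 * (P1 k * P2 k) + X 11 * (P2 k) ^ 2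

/-- The second global equation of X8 in X:  F2(A) = q2(p(A)). -/
noncomputable def F2 : MvPolynomial (Fin 18) k :=
  X 12 * (P0 k) ^ 2 + X 13 * (P0 k * P1 k) + X 14 * (P0 k * P2 k)
    + X 15 * (P1 k) ^ 2 + X 16 * (P1 k * P2 k) + X 17 * (P2 k) ^ 2

/-- The linear form z1 of the matrix with coordinates A. -/
noncomputable def z1poly (A : Fin 18 → k) : MvPolynomial (Fin 3) k :=
  C (A 0) * X 0 + C (A 1) * X 1 + C (A 2) * X 2
/-- The linear form z2. -/
noncomputable def z2poly (A : Fin 18 → k) : MvPolynomial (Fin 3) k :=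
  C (A 3) * X 0 + C (A 4) * X 1 + C (A 5) * X 2
/-- The quadratic form q1. -/
noncomputable def q1poly (A : Fin 18 → k) : MvPolynomial (Fin 3) k :=
  C (A 6) * X 0 ^ 2 + C (A 7) * (X 0 * X 1) + C (A 8) * (X 0 * X 2)
    + C (A 9) * X 1 ^ 2 + C (A 10) * (X 1 * X 2) + C (A 11) * X 2 ^ 2
/-- The quadratic form q2. -/
noncomputable def q2poly (A : Fin 18 → k) : MvPolynomial (Fin 3) k :=
  C (A 12) * X 0 ^ 2 + C (A 13) * (X 0 * X 1) + C (A 14) * (X 0 * X 2)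
    + C (A 15) * X 1 ^ 2 + C (A 16) * (X 1 * X 2) + C (A 17) * X 2 ^ 2

/-- X ⊂ k^18: matrices with linearly independent linear entries and nonzero
determinant. -/
def Xset : Set (Fin 18 → k) :=
  {A | LinearIndependent k ![![A 0, A 1, A 2], ![A 3, A 4, A 5]] ∧
    z1poly k A * q2poly k A - z2poly k A * q1poly k A ≠ 0}

/-- X8 ⊂ X: the locus where the cokernel sheaf is singular, i.e. where both global
equations F1, F2 vanish. -/
noncomputable def X8set : Set (Fin 18 → k) :=
  {A | A ∈ Xset k ∧ eval A (F1 k) = 0 ∧ eval A (F2 k) = 0}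


/-! ### Auxiliary lemmas -/

lemma cross_ne_zero_aux {a b c d e f : k} (h : LinearIndependent k ![![a,b,c],![d,e,f]])
    (h0 : b*f - c*e = 0) (h1 : c*d - a*f = 0) (h2 : a*e - b*d = 0) : False := by
  rw [LinearIndependent.pair_iff] at h
  by_cases ha : a = 0
  · by_cases hb : b = 0
    · by_cases hc : c = 0
      · have := (h 1 0 (by funext i; fin_cases i <;> simp [ha, hb, hc])).1
        norm_num at this
      · have : f = 0 ∧ -c = 0 := h f (-c) (by
          funext i; fin_cases i
          · simp; linear_combination -h1
          · simp; linear_combination h0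
          · simp; ring)
        exact hc (neg_eq_zero.mp this.2)
    · have : e = 0 ∧ -b = 0 := h e (-b) (by
        funext i; fin_cases i
        · simp; linear_combination h2
        · simp; ring
        · simp; linear_combination -h0)
      exact hb (neg_eq_zero.mp this.2)
  · have : d = 0 ∧ -a = 0 := h d (-a) (by
      funext i; fin_cases i
      · simp; ring
      · simp; linear_combination -h2
      · simp; linear_combination h1)
    exact ha (neg_eq_zero.mp this.2)

set_option maxHeartbeats 2000000 in
lemma dF1_6 (A : Fin 18 → k) : eval A (pderiv 6 (F1 k)) = (eval A (P0 k))^2 := by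
  simp [F1, P0, P1, P2]

set_option maxHeartbeats 2000000 in
lemma dF1_9 (A : Fin 18 → k) : eval A (pderiv 9 (F1 k)) = (eval A (P1 k))^2 := by
  simp [F1, P0, P1, P2]

set_option maxHeartbeats 2000000 in
lemma dF1_11 (A : Fin 18 → k) : eval A (pderiv 11 (F1 k)) = (eval A (P2 k))^2 := by
  simp [F1, P0, P1, P2]

set_option maxHeartbeats 2000000 in
lemma dF2_12 (A : Fin 18 → k) : eval A (pderiv 12 (F2 k)) = (eval A (P0 k))^2 := by
  simp [F2, P0, P1, P2]

set_option maxHeartbeats 2000000 in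
lemma dF2_15 (A : Fin 18 → k) : eval A (pderiv 15 (F2 k)) = (eval A (P1 k))^2 := by
  simp [F2, P0, P1, P2]

set_option maxHeartbeats 2000000 in
lemma dF2_17 (A : Fin 18 → k) : eval A (pderiv 17 (F2 k)) = (eval A (P2 k))^2 := by
  simp [F2, P0, P1, P2]

set_option maxHeartbeats 2000000 in
lemma dF1_hi (A : Fin 18 → k) (i : Fin 18) (hi : i = 12 ∨ i = 15 ∨ i = 17) :
    eval A (pderiv i (F1 k)) = 0 := by
  rcases hi with rfl | rfl | rfl <;> simp [F1, P0, P1, P2]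

set_option maxHeartbeats 2000000 in
lemma dF2_lo (A : Fin 18 → k) (i : Fin 18) (hi : i = 6 ∨ i = 9 ∨ i = 11) :
    eval A (pderiv i (F2 k)) = 0 := by
  rcases hi with rfl | rfl | rfl <;> simp [F2, P0, P1, P2]

/-- X8 is a smooth global complete intersection of codimension 2
in X:  it is cut out in X by the two global equations F1(A) = q1(p(A)) = 0 and
F2(A) = q2(p(A)) = 0, and at every point of X8 the gradients of F1 and F2 are
linearly independent (smoothness of codimension 2). -/
theorem X8_smooth_complete_intersection :
    X8set k = {A ∈ Xset k | eval A (F1 k) = 0 ∧ eval A (F2 k) = 0} ∧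
    ∀ A ∈ X8set k,
      LinearIndependent k
        ![fun i => eval A (pderiv i (F1 k)), fun i => eval A (pderiv i (F2 k))] := by
  constructor
  · rfl
  · intro A hA
    obtain ⟨⟨hli, _⟩, hF1, hF2⟩ := hA
    rw [LinearIndependent.pair_iff]
    intro s t hst
    have hcross : eval A (P0 k) ≠ 0 ∨ eval A (P1 k) ≠ 0 ∨ eval A (P2 k) ≠ 0 := by
      by_contra hc
      push_neg at hc
      obtain ⟨h0, h1, h2⟩ := hc
      simp only [P0, P1, P2, map_sub, map_mul, eval_X] at h0 h1 h2
      exact cross_ne_zero_aux k hli h0 h1 h2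
    have key : ∀ (i j : Fin 18), eval A (pderiv i (F2 k)) = 0 →
        eval A (pderiv j (F1 k)) = 0 →
        s * eval A (pderiv i (F1 k)) = 0 ∧ t * eval A (pderiv j (F2 k)) = 0 := by
      intro i j h2z h1z
      have ei := congrFun hst i
      have ej := congrFun hst j
      simp only [Matrix.cons_val_zero, Matrix.cons_val_one, Matrix.head_cons,
        Pi.add_apply, Pi.smul_apply, smul_eq_mul, Pi.zero_apply, h2z, h1z,
        mul_zero, add_zero, zero_add] at ei ej
      exact ⟨ei, ej⟩
    rcases hcross with h | h | h
    · obtain ⟨e1, e2⟩ := key 6 12 (dF2_lo k A 6 (Or.inl rfl)) (dF1_hi k A 12 (Or.inl rfl))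
      rw [dF1_6] at e1; rw [dF2_12] at e2
      exact ⟨by exact (mul_eq_zero.mp e1).resolve_right (pow_ne_zero _ h),
        (mul_eq_zero.mp e2).resolve_right (pow_ne_zero _ h)⟩
    · obtain ⟨e1, e2⟩ := key 9 15 (dF2_lo k A 9 (Or.inr (Or.inl rfl)))
        (dF1_hi k A 15 (Or.inr (Or.inl rfl)))
      rw [dF1_9] at e1; rw [dF2_15] at e2
      exact ⟨(mul_eq_zero.mp e1).resolve_right (pow_ne_zero _ h),
        (mul_eq_zero.mp e2).resolve_right (pow_ne_zero _ h)⟩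
    · obtain ⟨e1, e2⟩ := key 11 17 (dF2_lo k A 11 (Or.inr (Or.inr rfl)))
        (dF1_hi k A 17 (Or.inr (Or.inr rfl)))
      rw [dF1_11] at e1; rw [dF2_17] at e2
      exact ⟨(mul_eq_zero.mp e1).resolve_right (pow_ne_zero _ h),
        (mul_eq_zero.mp e2).resolve_right (pow_ne_zero _ h)⟩
end

section
/- Let C1 ⊂ P2 be a smooth conic meeting the line L = {u0 = 0} transversally in two distinct points q1, q2. Then the subgroup of automorphisms of P2 fixing L pointwise and preserving C1 has exactly two elements, the nontrivial one being the central symmetry (harmonic homology) with respect to the intersection point of the tangent lines to C1 at q1 and q2. -/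
/-!
STATEMENT 17.  Let C1 ⊂ P2 be a smooth conic meeting the line L = {u0 = 0}
transversally in two distinct points q1, q2.  The subgroup of automorphisms of P2
fixing L pointwise and preserving C1 has exactly two elements; the nontrivial one is
the harmonic homology (central symmetry) with respect to the intersection point of
the tangent lines to C1 at q1 and q2.

Automorphisms of P2 fixing L pointwise are exactly ⟨u⟩ ↦ ⟨u · M(α,β,γ)⟩ with
M(α,β,γ) = (α, β, γ; 0, 1, 0; 0, 0, 1), α ∈ k* — this is a faithful parametrisation,
so the subgroup is identified with a subset of triples (α,β,γ).  The smooth conic is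
given by an invertible symmetric matrix Q, a point ⟨u⟩ lies on it iff u·Q·uᵀ = 0,
and M preserves it iff M·Q·Mᵀ = d·Q for some d ≠ 0.  The tangent line to the conic
at a point q is {⟨w⟩ : q·Q·wᵀ = 0}.
-/

open Matrix

variable {k : Type*} [Field k] [IsAlgClosed k] [CharZero k]

/-- The matrix of the automorphism of P2 with parameters (α, β, γ), fixing the line
u0 = 0 pointwise. -/
def Mmat (a b c : k) : Matrix (Fin 3) (Fin 3) k := !![a, b, c; 0, 1, 0; 0, 0, 1]

set_option maxHeartbeats 1600000 in
/-- the stabilizer of a smooth conic C1 (meeting L = {u0 = 0} in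
two distinct points q1 ≠ q2) inside the group of automorphisms of P2 fixing L
pointwise has exactly two elements, and its nontrivial element is an involution
fixing the intersection point of the tangent lines to C1 at q1 and q2 (the harmonic
homology with that center and axis L). -/
theorem conic_stabilizer
    (Q : Matrix (Fin 3) (Fin 3) k) (hsymm : Q.IsSymm) (hsmooth : IsUnit Q.det)
    (q1 q2 : Fin 3 → k) (hq1 : q1 ≠ 0) (hq2 : q2 ≠ 0)
    (hq1L : q1 0 = 0) (hq2L : q2 0 = 0)
    (hq1C : q1 ⬝ᵥ (Q *ᵥ q1) = 0) (hq2C : q2 ⬝ᵥ (Q *ᵥ q2) = 0)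
    (hdist : ∀ c : k, q2 ≠ c • q1) :
    let St : Set (k × k × k) :=
      {m | m.1 ≠ 0 ∧ ∃ d : k, d ≠ 0 ∧
        Mmat m.1 m.2.1 m.2.2 * Q * (Mmat m.1 m.2.1 m.2.2)ᵀ = d • Q}
    St.ncard = 2 ∧
      ∀ m ∈ St, m ≠ ((1 : k), (0 : k), (0 : k)) →
        Mmat m.1 m.2.1 m.2.2 * Mmat m.1 m.2.1 m.2.2 = 1 ∧
        ∀ P : Fin 3 → k, P ≠ 0 →
          q1 ⬝ᵥ (Q *ᵥ P) = 0 → q2 ⬝ᵥ (Q *ᵥ P) = 0 →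
          ∃ c : k, c ≠ 0 ∧ Matrix.vecMul P (Mmat m.1 m.2.1 m.2.2) = c • P := by
  intro St
  have hQ10 : Q 1 0 = Q 0 1 := hsymm.apply 0 1
  have hQ20 : Q 2 0 = Q 0 2 := hsymm.apply 0 2
  have hQ21 : Q 2 1 = Q 1 2 := hsymm.apply 1 2
  set A := Q 0 0 with hA
  set D := Q 0 1 with hD
  set E := Q 0 2 with hE
  set F := Q 1 1 with hF
  set G := Q 1 2 with hG
  set H := Q 2 2 with hH
  set x1 := q1 1 with hx1
  set y1 := q1 2 with hy1
  set x2 := q2 1 with hx2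
  set y2 := q2 2 with hy2
  -- transpose of Mmat
  have hMt : ∀ a b c : k, (Mmat a b c)ᵀ = !![a,0,0;b,1,0;c,0,1] := by
    intro a b c
    ext i j
    fin_cases i <;> fin_cases j <;> simp [Mmat, Matrix.vecHead, Matrix.vecTail]
  -- key characterisation of the matrix equation
  have key : ∀ a b c d : k, (Mmat a b c * Q * (Mmat a b c)ᵀ = d • Q) ↔
      (F = d * F ∧ G = d * G ∧ H = d * H ∧
       a * D + b * F + c * G = d * D ∧
       a * E + b * G + c * H = d * E ∧
       a*a*A + 2*a*b*D + 2*a*c*E + b*b*F + 2*b*c*G + c*c*H = d * A) := by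
    intro a b c d
    rw [hMt]
    constructor
    · intro h
      have h11 := Matrix.ext_iff.2 h 1 1
      have h12 := Matrix.ext_iff.2 h 1 2
      have h22 := Matrix.ext_iff.2 h 2 2
      have h01 := Matrix.ext_iff.2 h 0 1
      have h02 := Matrix.ext_iff.2 h 0 2
      have h00 := Matrix.ext_iff.2 h 0 0
      simp [Mmat, Matrix.mul_apply, Matrix.vecMul, dotProduct, Fin.sum_univ_three,
        hQ10, hQ20, hQ21, ← hA, ← hD, ← hE, ← hF, ← hG, ← hH] at h11 h12 h22 h01 h02 h00
      refine ⟨?_, ?_, ?_, ?_, ?_, ?_⟩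
      · linear_combination h11
      · linear_combination h12
      · linear_combination h22
      · linear_combination h01
      · linear_combination h02
      · linear_combination h00
    · rintro ⟨e1, e2, e3, e4, e5, e6⟩
      ext i j
      fin_cases i <;> fin_cases j <;>
        simp [Mmat, Matrix.mul_apply, Matrix.vecMul, dotProduct, Fin.sum_univ_three,
          hQ10, hQ20, hQ21, ← hA, ← hD, ← hE, ← hF, ← hG, ← hH] <;>
        first
          | linear_combination e6 | linear_combination e4 | linear_combination e5
          | linear_combination e1 | linear_combination e2 | linear_combination e3
          | linear_combination -e1 | linear_combination -e2 | linear_combination -e3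
          | linear_combination -e4 | linear_combination -e5 | linear_combination -e6
  -- conic equations for q1, q2
  have hc1 : F*x1*x1 + 2*G*x1*y1 + H*y1*y1 = 0 := by
    simp [dotProduct, Matrix.mulVec, Fin.sum_univ_three, hq1L,
      hQ10, hQ20, hQ21, ← hA, ← hD, ← hE, ← hF, ← hG, ← hH, ← hx1, ← hy1] at hq1C
    linear_combination hq1C
  have hc2 : F*x2*x2 + 2*G*x2*y2 + H*y2*y2 = 0 := by
    simp [dotProduct, Matrix.mulVec, Fin.sum_univ_three, hq2L,
      hQ10, hQ20, hQ21, ← hA, ← hD, ← hE, ← hF, ← hG, ← hH, ← hx2, ← hy2] at hq2C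
    linear_combination hq2C
  -- the two intersection points are projectively distinct
  have hΔ : x1*y2 - x2*y1 ≠ 0 := by
    intro hzero
    have hne1 : x1 ≠ 0 ∨ y1 ≠ 0 := by
      by_contra hcon
      push_neg at hcon
      apply hq1
      funext i
      fin_cases i
      · exact hq1L
      · exact hcon.1
      · exact hcon.2
    rcases hne1 with hx | hy
    · apply hdist (x2 / x1)
      funext i
      fin_cases i
      · simp [hq2L, hq1L]
      · show x2 = x2 / x1 * x1
        field_simp
      · show y2 = x2 / x1 * y1
        field_simp
        linear_combination hzero
    · apply hdist (y2 / y1)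
      funext i
      fin_cases i
      · simp [hq2L, hq1L]
      · show x2 = y2 / y1 * x1
        field_simp
        linear_combination -hzero
      · show y2 = y2 / y1 * y1
        field_simp
  -- determinant nonzero
  have hdet : Q.det ≠ 0 := hsmooth.ne_zero
  have hT : A*(F*H - G*G) - D*(D*H - G*E) - E*(F*E - G*D) ≠ 0 := by
    intro h0
    apply hdet
    rw [Matrix.det_fin_three, hQ10, hQ20, hQ21, ← hA, ← hD, ← hE, ← hF, ← hG, ← hH]
    linear_combination h0
  -- the restricted quadratic form is nondegenerate
  have hδ0 : F*H - G*G ≠ 0 := by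
    intro hδ0
    have e1 : (F * x1 + G * y1) ^ 2 = 0 := by
      linear_combination F * hc1 - y1^2 * hδ0
    have e2 : (F * x2 + G * y2) ^ 2 = 0 := by
      linear_combination F * hc2 - y2^2 * hδ0
    have e1' : F * x1 + G * y1 = 0 := pow_eq_zero_iff (n := 2) (by norm_num) |>.1 e1
    have e2' : F * x2 + G * y2 = 0 := pow_eq_zero_iff (n := 2) (by norm_num) |>.1 e2
    have hF0 : F = 0 := by
      have h : F * (x1*y2 - x2*y1) = 0 := by linear_combination y2 * e1' - y1 * e2'
      exact (mul_eq_zero.1 h).resolve_right hΔ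
    have hG0 : G = 0 := by
      have h : G * G = 0 := by linear_combination -hδ0 + H * hF0
      simpa using h
    have hH0 : H = 0 := by
      by_contra hH0
      have hy1' : y1 = 0 := by
        have h2 : H * y1 ^ 2 = 0 := by linear_combination hc1 - x1*x1*hF0 - 2*x1*y1*hG0
        have := (mul_eq_zero.1 h2).resolve_left hH0
        simpa using this
      have hy2' : y2 = 0 := by
        have h2 : H * y2 ^ 2 = 0 := by linear_combination hc2 - x2*x2*hF0 - 2*x2*y2*hG0
        have := (mul_eq_zero.1 h2).resolve_left hH0
        simpa using this
      apply hΔ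
      rw [hy1', hy2']
      ring
    apply hT
    rw [hF0, hG0, hH0]
    ring
  -- opaque abbreviations
  obtain ⟨δ, hδdef⟩ : ∃ x : k, x = F*H - G*G := ⟨_, rfl⟩
  obtain ⟨p, hpdef⟩ : ∃ x : k, x = D*H - G*E := ⟨_, rfl⟩
  obtain ⟨q₀, hqdef⟩ : ∃ x : k, x = F*E - G*D := ⟨_, rfl⟩
  have hδ : δ ≠ 0 := by rw [hδdef]; exact hδ0
  have hT' : A*δ - D*p - E*q₀ ≠ 0 := by
    rw [hδdef, hpdef, hqdef]
    intro h0
    exact hT (by linear_combination h0)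
  obtain ⟨b2, hb2⟩ : ∃ x : k, x = 2*p/δ := ⟨_, rfl⟩
  obtain ⟨c2, hc2'⟩ : ∃ x : k, x = 2*q₀/δ := ⟨_, rfl⟩
  have hδb2 : δ * b2 = 2 * p := by rw [hb2]; field_simp
  have hδc2 : δ * c2 = 2 * q₀ := by rw [hc2']; field_simp
  -- the set equality
  have hSt : St = {((1:k),(0:k),(0:k)), ((-1:k), b2, c2)} := by
    ext ⟨a, b, c⟩
    constructor
    · rintro ⟨ha, d, hd, hM⟩
      rw [key] at hM
      obtain ⟨e1, e2, e3, e4, e5, e6⟩ := hM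
      have hd1 : d = 1 := by
        by_contra hd1
        have hd1' : d - 1 ≠ 0 := sub_ne_zero.2 hd1
        have hF0 : F = 0 := by
          have h : (d - 1) * F = 0 := by linear_combination -e1
          exact (mul_eq_zero.1 h).resolve_left hd1'
        have hG0 : G = 0 := by
          have h : (d - 1) * G = 0 := by linear_combination -e2
          exact (mul_eq_zero.1 h).resolve_left hd1'
        have hH0 : H = 0 := by
          have h : (d - 1) * H = 0 := by linear_combination -e3
          exact (mul_eq_zero.1 h).resolve_left hd1'
        exact hδ0 (by rw [hF0, hG0, hH0]; ring)
      subst hd1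
      have hbb : δ * b = (1 - a) * p := by
        rw [hδdef, hpdef]
        linear_combination H * e4 - G * e5
      have hcc : δ * c = (1 - a) * q₀ := by
        rw [hδdef, hqdef]
        linear_combination F * e5 - G * e4
      have hfac : (a - 1) * (a + 1) * (δ * (A*δ - D*p - E*q₀)) = 0 := by
        rw [hδdef, hpdef, hqdef]
        rw [hδdef, hpdef] at hbb
        rw [hδdef, hqdef] at hcc
        linear_combination ((F*H - G*G)^2) * e6
          - (2*a*D*(F*H - G*G) + F*((F*H - G*G)*b + (1-a)*(D*H - G*E)) + 2*G*((F*H - G*G)*c)) * hbb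
          - (2*a*E*(F*H - G*G) + 2*G*((1-a)*(D*H - G*E)) + H*((F*H - G*G)*c + (1-a)*(F*E - G*D))) * hcc
      have hδT : δ * (A*δ - D*p - E*q₀) ≠ 0 := mul_ne_zero hδ hT'
      have hfac' : (a - 1) * (a + 1) = 0 := (mul_eq_zero.1 hfac).resolve_right hδT
      rcases mul_eq_zero.1 hfac' with h1 | h1
      · left
        have ha1 : a = 1 := sub_eq_zero.1 h1
        subst ha1
        have hb0 : b = 0 := by
          have h : δ * b = 0 := by rw [hbb]; ring
          exact (mul_eq_zero.1 h).resolve_left hδ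
        have hc0 : c = 0 := by
          have h : δ * c = 0 := by rw [hcc]; ring
          exact (mul_eq_zero.1 h).resolve_left hδ
        rw [hb0, hc0]
      · right
        have ha1 : a = -1 := eq_neg_of_add_eq_zero_left h1
        subst ha1
        have hb0 : b = b2 := by
          apply mul_left_cancel₀ hδ
          rw [hδb2, hbb]
          ring
        have hc0 : c = c2 := by
          apply mul_left_cancel₀ hδ
          rw [hδc2, hcc]
          ring
        rw [hb0, hc0]
        rfl
    · intro hmem
      rcases hmem with hmem | hmem
      · obtain ⟨ha, hb, hc⟩ : a = 1 ∧ b = 0 ∧ c = 0 := by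
          simpa [Prod.ext_iff] using hmem
        refine ⟨by rw [ha]; exact one_ne_zero, 1, one_ne_zero, ?_⟩
        show Mmat a b c * Q * (Mmat a b c)ᵀ = (1:k) • Q
        rw [ha, hb, hc, key]
        refine ⟨by ring, by ring, by ring, by ring, by ring, by ring⟩
      · obtain ⟨ha, hb, hc⟩ : a = -1 ∧ b = b2 ∧ c = c2 := by
          simpa [Prod.ext_iff] using hmem
        refine ⟨by rw [ha]; norm_num, 1, one_ne_zero, ?_⟩
        show Mmat a b c * Q * (Mmat a b c)ᵀ = (1:k) • Q
        rw [ha, hb, hc, key]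
        refine ⟨by ring, by ring, by ring, ?_, ?_, ?_⟩
        · apply mul_left_cancel₀ hδ
          rw [mul_add, mul_add, ← mul_assoc δ b2, ← mul_assoc δ c2, hδb2, hδc2,
            hδdef, hpdef, hqdef]
          ring
        · apply mul_left_cancel₀ hδ
          rw [mul_add, mul_add, ← mul_assoc δ b2, ← mul_assoc δ c2, hδb2, hδc2,
            hδdef, hpdef, hqdef]
          ring
        · apply mul_left_cancel₀ (mul_ne_zero hδ hδ)
          have h1 : (δ*δ) * ((-1)*(-1)*A + 2*(-1)*b2*D + 2*(-1)*c2*E + b2*b2*F + 2*b2*c2*G + c2*c2*H)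
              = A*δ*δ - 2*δ*(2*p)*D - 2*δ*(2*q₀)*E + (2*p)*(2*p)*F + 2*(2*p)*(2*q₀)*G + (2*q₀)*(2*q₀)*H := by
            linear_combination (-2*δ*D + F*(δ*b2 + 2*p) + 2*G*(δ*c2)) * hδb2
              + (-2*δ*E + 2*G*(2*p) + H*(δ*c2 + 2*q₀)) * hδc2
          rw [h1, hδdef, hpdef, hqdef]
          ring
  constructor
  · rw [hSt]
    apply Set.ncard_pair
    intro hcon
    have h1 : (1:k) = -1 := congrArg Prod.fst hcon
    norm_num at h1
  · intro m hm hne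
    have hm2 : m = ((-1:k), b2, c2) := by
      rw [hSt] at hm
      rcases hm with hm | hm
      · exact absurd hm hne
      · exact hm
    subst hm2
    constructor
    · ext i j
      fin_cases i <;> fin_cases j <;>
        simp [Mmat, Matrix.mul_apply, Matrix.vecMul, dotProduct, Fin.sum_univ_three,
          Matrix.vecHead, Matrix.vecTail, Matrix.one_apply] <;> ring
    · intro P hP h1P h2P
      simp [dotProduct, Matrix.mulVec, Fin.sum_univ_three, hq1L, hq2L,
        hQ10, hQ20, hQ21, ← hA, ← hD, ← hE, ← hF, ← hG, ← hH,
        ← hx1, ← hy1, ← hx2, ← hy2] at h1P h2P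
      have hu : D * P 0 + F * P 1 + G * P 2 = 0 := by
        have h : (x1*y2 - x2*y1) * (D * P 0 + F * P 1 + G * P 2) = 0 := by
          linear_combination y2 * h1P - y1 * h2P
        exact (mul_eq_zero.1 h).resolve_left hΔ
      have hv : E * P 0 + G * P 1 + H * P 2 = 0 := by
        have h : (x1*y2 - x2*y1) * (E * P 0 + G * P 1 + H * P 2) = 0 := by
          linear_combination x1 * h2P - x2 * h1P
        exact (mul_eq_zero.1 h).resolve_left hΔ
      have hP1 : δ * P 1 = -p * P 0 := by
        rw [hδdef, hpdef]
        linear_combination H * hu - G * hv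
      have hP2 : δ * P 2 = -q₀ * P 0 := by
        rw [hδdef, hqdef]
        linear_combination F * hv - G * hu
      have hP0 : P 0 ≠ 0 := by
        intro h0
        apply hP
        funext i
        fin_cases i
        · exact h0
        · have h : δ * P 1 = 0 := by rw [hP1, h0]; ring
          exact (mul_eq_zero.1 h).resolve_left hδ
        · have h : δ * P 2 = 0 := by rw [hP2, h0]; ring
          exact (mul_eq_zero.1 h).resolve_left hδ
      refine ⟨-1, by norm_num, ?_⟩
      funext j
      fin_cases j
      · simp [Matrix.vecMul, Mmat, dotProduct, Fin.sum_univ_three, Matrix.vecHead, Matrix.vecTail]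
      · simp [Matrix.vecMul, Mmat, dotProduct, Fin.sum_univ_three, Matrix.vecHead, Matrix.vecTail]
        apply mul_left_cancel₀ hδ
        linear_combination P 0 * hδb2 + 2 * hP1
      · simp [Matrix.vecMul, Mmat, dotProduct, Fin.sum_univ_three, Matrix.vecHead, Matrix.vecTail]
        apply mul_left_cancel₀ hδ
        linear_combination P 0 * hδc2 + 2 * hP2
end
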